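/- arXiv:0712.0245 — 5 statements merged into one kernel-verified Lean document; each statement's English description precedes it below -/
import Mathlib

section
/- Let f : X → Y be a submetry between metric spaces, where X is proper and geodesic. Then for every p ∈ X and every y ∈ Y, setting l := dist(f(p), y), there exists a map γ : [0, l] → X such that γ(0) = p, f(γ(l)) = y, dist(γ(s), γ(t)) = |s − t| for all s, t ∈ [0, l], and moreover dist(f(γ(s)), f(γ(t))) = |s − t| for all s, t ∈ [0, l]; that is, every point of X is the starting point of a horizontal shortest path to any fibre of f, and this shortest path projects under f to a shortest path in Y from f(p) to y. -/
/-- A map between metric spaces is a *submetry* if it maps every open metric ball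
onto the open metric ball of the same radius around the image of the center. -/
def IsSubmetry {X Y : Type*} [MetricSpace X] [MetricSpace Y] (f : X → Y) : Prop :=
  ∀ (x : X) (r : ℝ), 0 < r → f '' Metric.ball x r = Metric.ball (f x) r

lemma isSubmetry_dist_le {X Y : Type*} [MetricSpace X] [MetricSpace Y] {f : X → Y}
    (hf : IsSubmetry f) (a b : X) : dist (f a) (f b) ≤ dist a b := by
  refine le_of_forall_pos_le_add fun ε hε => ?_
  have hr : 0 < dist a b + ε := by positivity
  have hb : f b ∈ Metric.ball (f a) (dist a b + ε) := by
    rw [← hf a _ hr]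
    exact ⟨b, by simp [Metric.mem_ball, dist_comm]; linarith, rfl⟩
  rw [dist_comm]
  exact le_of_lt hb

/-- Let `f : X → Y` be a submetry from a proper geodesic metric space. Then every
point `p ∈ X` is the starting point of a horizontal shortest path (a unit-speed
path of length `l = dist (f p) y` whose pairwise distances realize `|s - t|`)
ending in the fibre over any `y ∈ Y`, and this path projects under `f` to a
shortest path from `f p` to `y` in `Y`. -/
theorem IsSubmetry.exists_horizontal_shortest_path {X Y : Type*}
    [MetricSpace X] [MetricSpace Y] [ProperSpace X]
    (hgeo : ∀ x y : X, ∃ γ : ℝ → X, γ 0 = x ∧ γ (dist x y) = y ∧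
      ∀ s ∈ Set.Icc (0 : ℝ) (dist x y), ∀ t ∈ Set.Icc (0 : ℝ) (dist x y),
        dist (γ s) (γ t) = |s - t|)
    (f : X → Y) (hf : IsSubmetry f) (p : X) (y : Y) :
    ∃ γ : ℝ → X, γ 0 = p ∧ f (γ (dist (f p) y)) = y ∧
      (∀ s ∈ Set.Icc (0 : ℝ) (dist (f p) y), ∀ t ∈ Set.Icc (0 : ℝ) (dist (f p) y),
        dist (γ s) (γ t) = |s - t|) ∧
      (∀ s ∈ Set.Icc (0 : ℝ) (dist (f p) y), ∀ t ∈ Set.Icc (0 : ℝ) (dist (f p) y),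
        dist (f (γ s)) (f (γ t)) = |s - t|) := by
  set l := dist (f p) y with hl
  have hl0 : 0 ≤ l := dist_nonneg
  have hlip := isSubmetry_dist_le hf
  -- a sequence in the fibre over y approaching distance l from p
  have hq : ∀ n : ℕ, ∃ q : X, f q = y ∧ dist p q < l + 1 / (n + 1) := by
    intro n
    have hr : (0 : ℝ) < l + 1 / (n + 1) := by positivity
    have hy : y ∈ f '' Metric.ball p (l + 1 / (n + 1)) := by
      rw [hf p _ hr]
      have : (0:ℝ) < 1 / (n+1) := by positivity
      simp only [Metric.mem_ball, dist_comm y (f p), ← hl]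
      linarith
    obtain ⟨q, hq1, hq2⟩ := hy
    exact ⟨q, hq2, by simpa [Metric.mem_ball, dist_comm] using hq1⟩
  choose q hqf hqd using hq
  have hqball : ∀ n, q n ∈ Metric.closedBall p (l + 1) := by
    intro n
    have h1 : (1:ℝ) / (n + 1) ≤ 1 := by
      rw [div_le_one (by positivity)]
      have : (0:ℝ) ≤ n := Nat.cast_nonneg n
      linarith
    have := hqd n
    simp only [Metric.mem_closedBall, dist_comm (q n) p]
    linarith
  obtain ⟨x, hx, φ, hφ, hconv⟩ := (isCompact_closedBall p (l + 1)).tendsto_subseq hqball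
  have hfc : Continuous f :=
    (LipschitzWith.of_dist_le_mul fun a b => by simpa using hlip a b :
      LipschitzWith 1 f).continuous
  have hfx : f x = y := by
    have h1 : Filter.Tendsto (fun n => f (q (φ n))) Filter.atTop (nhds (f x)) :=
      (hfc.continuousAt.tendsto).comp hconv
    have h2 : (fun n => f (q (φ n))) = fun _ => y := funext fun n => hqf _
    rw [h2] at h1
    exact tendsto_nhds_unique h1 tendsto_const_nhds
  have hdist : dist p x = l := by
    have hle : dist p x ≤ l := by
      have hA : Filter.Tendsto (fun n => dist p (q (φ n))) Filter.atTop (nhds (dist p x)) :=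
        ((continuous_const.dist continuous_id).continuousAt.tendsto).comp hconv
      have hB : Filter.Tendsto (fun n : ℕ => l + 1 / ((φ n : ℝ) + 1)) Filter.atTop (nhds l) := by
        have h0 : Filter.Tendsto (fun n : ℕ => 1 / ((n : ℝ) + 1)) Filter.atTop (nhds 0) :=
          tendsto_one_div_add_atTop_nhds_zero_nat
        have := (tendsto_const_nhds : Filter.Tendsto (fun _ : ℕ => l) Filter.atTop (nhds l)).add
          (h0.comp hφ.tendsto_atTop)
        simpa using this
      exact le_of_tendsto_of_tendsto' hA hB fun n => (hqd (φ n)).le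
    have hge : l ≤ dist p x := by
      rw [hl, ← hfx]; exact hlip p x
    exact le_antisymm hle hge
  obtain ⟨γ, hγ0, hγl, hγd⟩ := hgeo p x
  rw [hdist] at hγl hγd
  have key : ∀ s ∈ Set.Icc (0 : ℝ) l, ∀ t ∈ Set.Icc (0 : ℝ) l, s ≤ t →
      dist (f (γ s)) (f (γ t)) = t - s := by
    intro s hs t ht hst
    have hub : dist (f (γ s)) (f (γ t)) ≤ t - s := by
      have := hlip (γ s) (γ t)
      rw [hγd s hs t ht, abs_of_nonpos (by linarith)] at this
      linarith
    have hmem0 : (0:ℝ) ∈ Set.Icc (0:ℝ) l := ⟨le_refl _, hl0⟩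
    have hmeml : l ∈ Set.Icc (0:ℝ) l := ⟨hl0, le_refl _⟩
    have h1 : dist (f (γ 0)) (f (γ s)) ≤ s := by
      have := hlip (γ 0) (γ s)
      rwa [hγd 0 hmem0 s hs, abs_of_nonpos (by linarith [hs.1]), zero_sub, neg_neg] at this
    have h2 : dist (f (γ t)) (f (γ l)) ≤ l - t := by
      have := hlip (γ t) (γ l)
      rw [hγd t ht l hmeml, abs_of_nonpos (by linarith [ht.2])] at this
      linarith
    have hchain : l ≤ dist (f (γ 0)) (f (γ s)) + dist (f (γ s)) (f (γ t))
        + dist (f (γ t)) (f (γ l)) := by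
      have h4 := dist_triangle4 (f (γ 0)) (f (γ s)) (f (γ t)) (f (γ l))
      have h5 : dist (f (γ 0)) (f (γ l)) = l := by rw [hγ0, hγl, hfx]
      linarith
    linarith
  refine ⟨γ, hγ0, by rw [hγl, hfx], hγd, ?_⟩
  intro s hs t ht
  rcases le_total s t with h | h
  · rw [key s hs t ht h, abs_of_nonpos (by linarith)]; ring
  · rw [dist_comm, key t ht s hs h, abs_of_nonneg (by linarith)]
end

section
/- Let X be a proper geodesic metric space which is not compact, and let p ∈ X. Then there exists a ray starting at p, i.e. a map γ : [0, ∞) → X with γ(0) = p and dist(γ(s), γ(t)) = |s − t| for all s, t ≥ 0. -/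
open Filter Metric Set Topology

/-- In a proper geodesic metric space which is not compact, every point is the
starting point of a geodesic ray. -/
theorem exists_ray_of_proper_geodesic_noncompact {X : Type*} [MetricSpace X] [ProperSpace X]
    (hgeo : ∀ x y : X, ∃ γ : ℝ → X, γ 0 = x ∧ γ (dist x y) = y ∧
      ∀ s ∈ Set.Icc (0 : ℝ) (dist x y), ∀ t ∈ Set.Icc (0 : ℝ) (dist x y),
        dist (γ s) (γ t) = |s - t|)
    (hnc : ¬ CompactSpace X) (p : X) :
    ∃ γ : ℝ → X, γ 0 = p ∧ ∀ s t : ℝ, 0 ≤ s → 0 ≤ t → dist (γ s) (γ t) = |s - t| := by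
  -- X is unbounded: there are points arbitrarily far from p
  have hub : ∀ r : ℝ, ∃ x : X, r ≤ dist p x := by
    by_contra h
    push_neg at h
    obtain ⟨r, hr⟩ := h
    exact hnc (isCompact_univ_iff.mp ((isCompact_closedBall p r).of_isClosed_subset
      isClosed_univ (fun y _ => by simpa [mem_closedBall, dist_comm] using (hr y).le)))
  choose x hx using hub
  set d : ℕ → ℝ := fun n => dist p (x n) with hd
  have hdn : ∀ n : ℕ, (n : ℝ) ≤ d n := fun n => hx n
  have hd0 : ∀ n, 0 ≤ d n := fun n => dist_nonneg
  choose g hg0 hgend hgiso using fun n => hgeo p (x n)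
  -- truncated geodesics
  set δ : ℕ → ℝ → X := fun n t => g n (min t (d n)) with hδ
  have hmem : ∀ n, ∀ t : ℝ, 0 ≤ t → min t (d n) ∈ Icc (0:ℝ) (d n) := fun n t ht =>
    ⟨le_min ht (hd0 n), min_le_right _ _⟩
  have hdist : ∀ n, ∀ s t : ℝ, 0 ≤ s → 0 ≤ t →
      dist (δ n s) (δ n t) = |min s (d n) - min t (d n)| := fun n s t hs ht =>
    hgiso n _ (hmem n s hs) _ (hmem n t ht)
  have h0 : ∀ n, δ n 0 = p := by
    intro n
    have : min (0:ℝ) (d n) = 0 := min_eq_left (hd0 n)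
    simp only [hδ, this]
    exact hg0 n
  have hball : ∀ n, ∀ t : ℝ, 0 ≤ t → δ n t ∈ closedBall p t := by
    intro n t ht
    have h := hdist n 0 t le_rfl ht
    rw [h0 n, min_eq_left (hd0 n)] at h
    rw [mem_closedBall, dist_comm, h, abs_sub_comm, sub_zero,
      abs_of_nonneg (le_min ht (hd0 n))]
    exact min_le_left _ _
  -- an ultrafilter extending atTop
  haveI : (atTop : Filter ℕ).NeBot := atTop_neBot
  set U : Ultrafilter ℕ := Ultrafilter.of atTop with hU
  have hUle : (U : Filter ℕ) ≤ atTop := Ultrafilter.of_le _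
  -- limits exist along U by properness
  have key : ∀ t : ℝ, 0 ≤ t → ∃ y : X, Tendsto (fun n => δ n t) (U : Filter ℕ) (𝓝 y) := by
    intro t ht
    obtain ⟨y, -, hy⟩ := (isCompact_closedBall p t).ultrafilter_le_nhds
      (U.map (fun n => δ n t)) (by
        rw [Ultrafilter.coe_map]
        exact le_principal_iff.mpr (mem_map.mpr (univ_mem' (fun n => hball n t ht))))
    exact ⟨y, by rwa [Ultrafilter.coe_map] at hy⟩
  classical
  refine ⟨fun t => if h : 0 ≤ t then (key t h).choose else p, ?_, ?_⟩
  · -- γ 0 = p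
    have h1 : Tendsto (fun n => δ n 0) (U : Filter ℕ) (𝓝 ((key 0 le_rfl).choose)) :=
      (key 0 le_rfl).choose_spec
    have h2 : Tendsto (fun n => δ n 0) (U : Filter ℕ) (𝓝 p) := by
      simp only [h0]; exact tendsto_const_nhds
    simp only [le_refl, dif_pos]
    exact tendsto_nhds_unique h1 h2
  · intro s t hs ht
    simp only [dif_pos hs, dif_pos ht]
    have h1 : Tendsto (fun n => dist (δ n s) (δ n t)) (U : Filter ℕ)
        (𝓝 (dist ((key s hs).choose) ((key t ht).choose))) :=
      ((key s hs).choose_spec).dist ((key t ht).choose_spec)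
    have h2 : Tendsto (fun n => dist (δ n s) (δ n t)) (U : Filter ℕ) (𝓝 |s - t|) := by
      obtain ⟨N, hN⟩ := exists_nat_ge (max s t)
      have hev : ∀ᶠ n in (U : Filter ℕ), dist (δ n s) (δ n t) = |s - t| := by
        apply hUle
        filter_upwards [eventually_ge_atTop N] with n hn
        have hsd : s ≤ d n := le_trans (le_trans (le_max_left s t) hN)
          (le_trans (Nat.cast_le.mpr hn) (hdn n))
        have htd : t ≤ d n := le_trans (le_trans (le_max_right s t) hN)
          (le_trans (Nat.cast_le.mpr hn) (hdn n))
        rw [hdist n s t hs ht, min_eq_left hsd, min_eq_left htd]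
      exact Tendsto.congr' (hev.mono fun n h => h.symm) tendsto_const_nhds
    exact tendsto_nhds_unique h1 h2
end

section
/- Let m be a natural number and let E be the m-dimensional real Euclidean space ℝ^m (with its standard inner-product metric). Let H be a commutative subgroup of the group of bijective isometries of E which acts simply transitively on E, i.e. for all x, y ∈ E there exists exactly one h ∈ H with h(x) = y. Then H acts by translations: for every h ∈ H there exists a vector v ∈ E such that h(x) = x + v for all x ∈ E. -/
/-- An abelian group of isometries acting simply transitively on Euclidean space
`ℝ^m` acts by translations. -/
theorem abelian_simply_transitive_isometry_group_acts_by_translations (m : ℕ)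
    (H : Subgroup (EuclideanSpace ℝ (Fin m) ≃ᵢ EuclideanSpace ℝ (Fin m)))
    (hcomm : ∀ a ∈ H, ∀ b ∈ H, a * b = b * a)
    (htrans : ∀ x y : EuclideanSpace ℝ (Fin m),
      ∃! h : H, (h : EuclideanSpace ℝ (Fin m) ≃ᵢ EuclideanSpace ℝ (Fin m)) x = y) :
    ∀ h ∈ H, ∃ v : EuclideanSpace ℝ (Fin m),
      ∀ x : EuclideanSpace ℝ (Fin m), h x = x + v := by
  set E := EuclideanSpace ℝ (Fin m)
  intro h hH
  refine ⟨h 0, fun x => ?_⟩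
  set v : E := h 0 with hv
  set L : E ≃ₗᵢ[ℝ] E := h.toRealLinearIsometryEquiv with hL
  have hLapp : ∀ w : E, L w = h w - v := fun w =>
    h.toRealLinearIsometryEquiv_apply w
  -- key bound: for all w, ‖L w - w‖ ≤ 2‖v‖
  have key : ∀ w : E, ‖L w - w‖ ≤ 2 * ‖v‖ := by
    intro w
    obtain ⟨⟨g, gH⟩, hg0, -⟩ := htrans 0 w
    simp only at hg0
    have hcom : h (g 0) = g (h 0) := by
      have := hcomm h hH g gH
      have := congrFun (congrArg (fun f : E ≃ᵢ E => (f : E → E)) this) 0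
      simpa using this
    have hLg := g.toRealLinearIsometryEquiv_apply v
    have heq : L w - w = g.toRealLinearIsometryEquiv v - v := by
      rw [hLapp, hLg, ← hg0, hcom, ← hv]
      abel
    rw [heq]
    calc ‖g.toRealLinearIsometryEquiv v - v‖
        ≤ ‖g.toRealLinearIsometryEquiv v‖ + ‖v‖ := norm_sub_le _ _
      _ = ‖v‖ + ‖v‖ := by rw [g.toRealLinearIsometryEquiv.norm_map]
      _ = 2 * ‖v‖ := by ring
  -- hence L = id
  have hLid : ∀ w : E, L w = w := by
    intro w
    by_contra hne
    have hpos : 0 < ‖L w - w‖ := by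
      rw [norm_pos_iff]; exact sub_ne_zero_of_ne hne
    obtain ⟨n, hn⟩ := exists_nat_gt (2 * ‖v‖ / ‖L w - w‖)
    have hkey := key (((n : ℝ) + 1) • w)
    rw [L.map_smul] at hkey
    have hsm : ((n : ℝ) + 1) • L w - ((n : ℝ) + 1) • w = ((n : ℝ) + 1) • (L w - w) :=
      (smul_sub _ _ _).symm
    rw [hsm, norm_smul, Real.norm_eq_abs, abs_of_pos (by positivity)] at hkey
    have h1 : 2 * ‖v‖ / ‖L w - w‖ < (n : ℝ) + 1 := by linarith
    rw [div_lt_iff₀ hpos] at h1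
    linarith
  have := hLid x
  rw [hLapp] at this
  exact eq_add_of_sub_eq this
end

section
/- Let G be a compact topological group whose topology is induced by a metric d. Let (H_j) be a sequence of subgroups of G, regarded as nonempty subsets, and let A ⊆ G be a nonempty closed subset such that the Hausdorff distance between H_j and A tends to 0 as j → ∞. Then A is a subgroup of G: the identity element 1 belongs to A, and for all a, b ∈ A one has a·b ∈ A and a⁻¹ ∈ A. -/
/-!
A point of a Hausdorff limit `A` of sets `S j` is exactly a limit of points `u j ∈ S j`
(`A` closed). For subgroups `H j`, products and inverses of such sequences are again such
sequences, and they converge to the product and inverse of the limits by continuity of the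
group operations.
-/

open Filter Topology Metric

section HausdorffLimit

variable {α : Type*} [MetricSpace α] {S : ℕ → Set α} {A : Set α}

theorem mem_of_tendsto_of_hausdorffDist_tendsto_zero (hAclosed : IsClosed A)
    (hfin : ∀ j, hausdorffEDist (S j) A ≠ ⊤)
    (hconv : Tendsto (fun j => hausdorffDist (S j) A) atTop (𝓝 0))
    {u : ℕ → α} {x : α} (hu : ∀ j, u j ∈ S j) (hux : Tendsto u atTop (𝓝 x)) : x ∈ A := by
  have hA : A.Nonempty := nonempty_of_hausdorffEDist_ne_top ⟨u 0, hu 0⟩ (hfin 0)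
  have hlim : Tendsto (fun j => infDist (u j) A) atTop (𝓝 (infDist x A)) :=
    ((continuous_infDist_pt A).tendsto x).comp hux
  have hzero : Tendsto (fun j => infDist (u j) A) atTop (𝓝 0) :=
    squeeze_zero (fun _ => infDist_nonneg)
      (fun j => infDist_le_hausdorffDist_of_mem (hu j) (hfin j)) hconv
  exact (hAclosed.mem_iff_infDist_zero hA).2 (tendsto_nhds_unique hlim hzero)

theorem exists_tendsto_of_mem_of_hausdorffDist_tendsto_zero
    (hfin : ∀ j, hausdorffEDist (S j) A ≠ ⊤)
    (hconv : Tendsto (fun j => hausdorffDist (S j) A) atTop (𝓝 0)) {a : α} (ha : a ∈ A) :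
    ∃ u : ℕ → α, (∀ j, u j ∈ S j) ∧ Tendsto u atTop (𝓝 a) := by
  have hbound : Tendsto (fun j : ℕ => hausdorffDist (S j) A + 1 / (j + 1)) atTop (𝓝 0) := by
    simpa using hconv.add tendsto_one_div_add_atTop_nhds_zero_nat
  have hclose : ∀ j : ℕ, ∃ y ∈ S j, dist y a < hausdorffDist (S j) A + 1 / (j + 1) :=
    fun j => exists_dist_lt_of_hausdorffDist_lt' ha
      (lt_add_of_pos_right _ Nat.one_div_pos_of_nat) (hfin j)
  choose u hu hdist using hclose
  exact ⟨u, hu, tendsto_iff_dist_tendsto_zero.2 <|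
    squeeze_zero (fun _ => dist_nonneg) (fun j => (hdist j).le) hbound⟩

end HausdorffLimit

theorem isSubgroup_of_hausdorffDist_tendsto_zero {G : Type*} [Group G] [MetricSpace G]
    [IsTopologicalGroup G] {H : ℕ → Subgroup G} {A : Set G} (hAclosed : IsClosed A)
    (hfin : ∀ j, hausdorffEDist (H j : Set G) A ≠ ⊤)
    (hconv : Tendsto (fun j => hausdorffDist (H j : Set G) A) atTop (𝓝 0)) :
    (1 : G) ∈ A ∧ ∀ a ∈ A, ∀ b ∈ A, a * b ∈ A ∧ a⁻¹ ∈ A := by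
  have limit_mem : ∀ {u : ℕ → G} {x : G}, (∀ j, u j ∈ H j) → Tendsto u atTop (𝓝 x) → x ∈ A :=
    mem_of_tendsto_of_hausdorffDist_tendsto_zero hAclosed hfin hconv
  refine ⟨limit_mem (fun j => (H j).one_mem) tendsto_const_nhds, fun a ha b hb => ?_⟩
  obtain ⟨u, hu, hua⟩ := exists_tendsto_of_mem_of_hausdorffDist_tendsto_zero hfin hconv ha
  obtain ⟨v, hv, hvb⟩ := exists_tendsto_of_mem_of_hausdorffDist_tendsto_zero hfin hconv hb
  exact ⟨limit_mem (fun j => (H j).mul_mem (hu j) (hv j)) (hua.mul hvb),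
    limit_mem (fun j => (H j).inv_mem (hu j)) hua.inv⟩

/-- In a compact metrizable topological group, a nonempty closed set which is the
limit in Hausdorff distance of a sequence of subgroups is itself a subgroup. -/
theorem closed_hausdorff_limit_of_subgroups_is_subgroup {G : Type*} [Group G]
    [MetricSpace G] [IsTopologicalGroup G] [CompactSpace G]
    (H : ℕ → Subgroup G) (A : Set G) (hA : A.Nonempty) (hAclosed : IsClosed A)
    (hconv : Tendsto (fun j => Metric.hausdorffDist ((H j : Set G)) A) atTop (nhds 0)) :
    (1 : G) ∈ A ∧ ∀ a ∈ A, ∀ b ∈ A, a * b ∈ A ∧ a⁻¹ ∈ A :=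
  isSubgroup_of_hausdorffDist_tendsto_zero hAclosed
    (fun j => hausdorffEDist_ne_top_of_nonempty_of_bounded ⟨1, (H j).one_mem⟩ hA
      (Bornology.IsBounded.all _) (Bornology.IsBounded.all _)) hconv
end

section
/- Fix n ≥ 1 and regard the orthogonal group O(n) as a metric space, as a subset of the n×n real matrices with a norm-induced metric. Let G ⊆ O(n) be a closed subgroup, let (G_j) be a sequence of subgroups of O(n), and let H ⊆ O(n) be a subgroup such that the Hausdorff distance between G_j and H tends to 0 as j → ∞. Suppose the orbit decompositions of the unit sphere S^{n−1} ⊆ ℝⁿ converge uniformly: for every ε > 0 there exists N such that for all j ≥ N and all x ∈ S^{n−1} the Hausdorff distance between the orbits G_j·x = {g x | g ∈ G_j} and G·x = {g x | g ∈ G} is at most ε. Then H leaves every G-orbit on the unit sphere invariant: for every h ∈ H and every x ∈ S^{n−1}, h·x ∈ G·x. -/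
-- Equip square real matrices with the Frobenius norm (a norm-induced metric).
attribute [local instance] Matrix.frobeniusNormedAddCommGroup

/-- The action of an `n × n` matrix on Euclidean space `ℝⁿ` by matrix-vector
multiplication. -/
noncomputable def matAct {n : ℕ} (g : Matrix (Fin n) (Fin n) ℝ)
    (x : EuclideanSpace ℝ (Fin n)) : EuclideanSpace ℝ (Fin n) :=
  (WithLp.equiv 2 (Fin n → ℝ)).symm (g.mulVec (WithLp.equiv 2 (Fin n → ℝ) x))

/-- The orbit of a point `x ∈ ℝⁿ` under a subgroup of the orthogonal group `O(n)`. -/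
noncomputable def orbitSet {n : ℕ} (G : Subgroup (Matrix.orthogonalGroup (Fin n) ℝ))
    (x : EuclideanSpace ℝ (Fin n)) : Set (EuclideanSpace ℝ (Fin n)) :=
  {y | ∃ g ∈ G, matAct ((g : Matrix.orthogonalGroup (Fin n) ℝ) : Matrix (Fin n) (Fin n) ℝ) x = y}

/-!
Closed subgroups of the compact group `O(n)` are compact, so the orbits `G·x` are closed and it
suffices to show that `h·x` is at distance zero from `G·x`. The action is `‖x‖`-Lipschitz in the
matrix, so some `g ∈ G_j` close to `h` gives a point `g·x ∈ G_j·x` close to `h·x`, and `G_j·x` is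
Hausdorff-close to `G·x`; hence
`infDist (h·x) (G·x) ≤ d_H(G_j, H) ‖x‖ + d_H(G_j·x, G·x)`, which tends to `0`.
-/

open Metric Filter Topology

theorem LipschitzWith.infDist_image_le {α β : Type*} [PseudoMetricSpace α] [PseudoMetricSpace β]
    {K : NNReal} {f : α → β} (hf : LipschitzWith K f) (a : α) (s : Set α) :
    infDist (f a) (f '' s) ≤ K * infDist a s := by
  rcases s.eq_empty_or_nonempty with rfl | hs
  · simp
  have : Nonempty s := hs.to_subtype
  rw [infDist_eq_iInf (s := s), Real.mul_iInf_of_nonneg K.coe_nonneg]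
  exact le_ciInf fun y => (infDist_le_dist_of_mem (Set.mem_image_of_mem f y.2)).trans
    (hf.dist_le_mul a y)

theorem Matrix.frobenius_norm_le_card_of_mem_unitaryGroup {ι 𝕜 : Type*} [Fintype ι] [DecidableEq ι]
    [RCLike 𝕜] {U : Matrix ι ι 𝕜} (hU : U ∈ unitaryGroup ι 𝕜) :
    ‖U‖ ≤ Fintype.card ι := by
  rw [frobenius_norm_def]
  calc (∑ i, ∑ j, ‖U i j‖ ^ (2 : ℝ)) ^ (1 / 2 : ℝ)
        ≤ (∑ _i : ι, ∑ _j : ι, (1 : ℝ)) ^ (1 / 2 : ℝ) := by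
        gcongr with i _ j _
        exact Real.rpow_le_one (norm_nonneg _) (entry_norm_bound_of_unitary hU i j) (by norm_num)
    _ = Fintype.card ι := by
        simp only [Finset.sum_const, Finset.card_univ, nsmul_eq_mul, mul_one, ← sq]
        rw [← Real.sqrt_eq_rpow, Real.sqrt_sq (Nat.cast_nonneg _)]

section OrthogonalAction

attribute [local instance] Matrix.frobeniusNormedSpace

variable {n : ℕ}

theorem norm_matAct_le (A : Matrix (Fin n) (Fin n) ℝ) (x : EuclideanSpace ℝ (Fin n)) :
    ‖matAct A x‖ ≤ ‖A‖ * ‖x‖ := by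
  have hAx := Matrix.frobenius_norm_mul A (Matrix.replicateCol Unit (WithLp.equiv 2 _ x))
  rwa [← Matrix.replicateCol_mulVec, Matrix.frobenius_norm_replicateCol,
    Matrix.frobenius_norm_replicateCol] at hAx

theorem lipschitzWith_matAct_left (x : EuclideanSpace ℝ (Fin n)) :
    LipschitzWith ‖x‖₊ fun A : Matrix (Fin n) (Fin n) ℝ => matAct A x := by
  refine LipschitzWith.of_dist_le_mul fun A B => ?_
  have hsub : matAct A x - matAct B x = matAct (A - B) x := by simp [matAct, Matrix.sub_mulVec]
  rw [dist_eq_norm, dist_eq_norm, hsub, coe_nnnorm, mul_comm]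
  exact norm_matAct_le _ _

theorem orbitSet_eq_image (G : Subgroup (Matrix.orthogonalGroup (Fin n) ℝ))
    (x : EuclideanSpace ℝ (Fin n)) :
    orbitSet G x = (fun A => matAct A x) ''
      ((fun g : Matrix.orthogonalGroup (Fin n) ℝ => (g : Matrix (Fin n) (Fin n) ℝ)) '' G) := by
  rw [Set.image_image]; rfl

theorem orbitSet_nonempty (G : Subgroup (Matrix.orthogonalGroup (Fin n) ℝ))
    (x : EuclideanSpace ℝ (Fin n)) : (orbitSet G x).Nonempty :=
  ⟨_, 1, G.one_mem, rfl⟩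

theorem isBounded_image_coe_orthogonalGroup (S : Set (Matrix.orthogonalGroup (Fin n) ℝ)) :
    Bornology.IsBounded
      ((fun g : Matrix.orthogonalGroup (Fin n) ℝ => (g : Matrix (Fin n) (Fin n) ℝ)) '' S) :=
  (isBounded_iff_forall_norm_le).2 ⟨Fintype.card (Fin n), by
    rintro _ ⟨g, -, rfl⟩
    exact Matrix.frobenius_norm_le_card_of_mem_unitaryGroup g.2⟩

theorem isBounded_orbitSet (G : Subgroup (Matrix.orthogonalGroup (Fin n) ℝ))
    (x : EuclideanSpace ℝ (Fin n)) : Bornology.IsBounded (orbitSet G x) := by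
  rw [orbitSet_eq_image]
  exact (lipschitzWith_matAct_left x).isBounded_image (isBounded_image_coe_orthogonalGroup _)

theorem isClosed_orbitSet {G : Subgroup (Matrix.orthogonalGroup (Fin n) ℝ)}
    (hG : IsClosed
      ((fun g : Matrix.orthogonalGroup (Fin n) ℝ => (g : Matrix (Fin n) (Fin n) ℝ)) '' G))
    (x : EuclideanSpace ℝ (Fin n)) : IsClosed (orbitSet G x) := by
  rw [orbitSet_eq_image]
  exact ((isCompact_of_isClosed_isBounded hG (isBounded_image_coe_orthogonalGroup _)).image
    (lipschitzWith_matAct_left x).continuous).isClosed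

theorem infDist_matAct_orbitSet_le {G H : Subgroup (Matrix.orthogonalGroup (Fin n) ℝ)}
    (K : Subgroup (Matrix.orthogonalGroup (Fin n) ℝ))
    {h : Matrix.orthogonalGroup (Fin n) ℝ} (hh : h ∈ H) (x : EuclideanSpace ℝ (Fin n)) :
    infDist (matAct (h : Matrix (Fin n) (Fin n) ℝ) x) (orbitSet G x) ≤
      hausdorffDist
          ((fun g : Matrix.orthogonalGroup (Fin n) ℝ => (g : Matrix (Fin n) (Fin n) ℝ)) '' K)
          ((fun g : Matrix.orthogonalGroup (Fin n) ℝ => (g : Matrix (Fin n) (Fin n) ℝ)) '' H) *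
        ‖x‖ +
      hausdorffDist (orbitSet K x) (orbitSet G x) := by
  set coe := fun g : Matrix.orthogonalGroup (Fin n) ℝ => (g : Matrix (Fin n) (Fin n) ℝ)
  have hgroups_ne_top : hausdorffEDist (coe '' H) (coe '' K) ≠ ⊤ :=
    hausdorffEDist_ne_top_of_nonempty_of_bounded ⟨_, 1, H.one_mem, rfl⟩ ⟨_, 1, K.one_mem, rfl⟩
      (isBounded_image_coe_orthogonalGroup _) (isBounded_image_coe_orthogonalGroup _)
  have horbit_ne_top : hausdorffEDist (orbitSet K x) (orbitSet G x) ≠ ⊤ :=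
    hausdorffEDist_ne_top_of_nonempty_of_bounded (orbitSet_nonempty K x) (orbitSet_nonempty G x)
      (isBounded_orbitSet K x) (isBounded_orbitSet G x)
  have hnear : infDist (matAct (coe h) x) (orbitSet K x) ≤
      hausdorffDist (coe '' K) (coe '' H) * ‖x‖ := by
    calc infDist (matAct (coe h) x) (orbitSet K x)
        ≤ ‖x‖₊ * infDist (coe h) (coe '' K) := by
          rw [orbitSet_eq_image]
          exact (lipschitzWith_matAct_left x).infDist_image_le _ _
      _ ≤ ‖x‖ * hausdorffDist (coe '' K) (coe '' H) := by
          rw [coe_nnnorm, hausdorffDist_comm]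
          gcongr
          exact infDist_le_hausdorffDist_of_mem ⟨h, hh, rfl⟩ hgroups_ne_top
      _ = _ := mul_comm _ _
  calc infDist (matAct (coe h) x) (orbitSet G x)
      ≤ infDist (matAct (coe h) x) (orbitSet K x) + hausdorffDist (orbitSet K x) (orbitSet G x) :=
        infDist_le_infDist_add_hausdorffDist horbit_ne_top
    _ ≤ _ := add_le_add_left hnear _

end OrthogonalAction

theorem limit_group_preserves_orbits_general (n : ℕ)
    (G : Subgroup (Matrix.orthogonalGroup (Fin n) ℝ))
    (hGclosed : IsClosed
      ((fun g : Matrix.orthogonalGroup (Fin n) ℝ => (g : Matrix (Fin n) (Fin n) ℝ)) ''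
        (G : Set (Matrix.orthogonalGroup (Fin n) ℝ))))
    (Gj : ℕ → Subgroup (Matrix.orthogonalGroup (Fin n) ℝ))
    (H : Subgroup (Matrix.orthogonalGroup (Fin n) ℝ))
    (hconv : Filter.Tendsto (fun j => Metric.hausdorffDist
        ((fun g : Matrix.orthogonalGroup (Fin n) ℝ => (g : Matrix (Fin n) (Fin n) ℝ)) ''
          (Gj j : Set (Matrix.orthogonalGroup (Fin n) ℝ)))
        ((fun g : Matrix.orthogonalGroup (Fin n) ℝ => (g : Matrix (Fin n) (Fin n) ℝ)) ''
          (H : Set (Matrix.orthogonalGroup (Fin n) ℝ))))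
      Filter.atTop (nhds 0))
    (horb : ∀ ε : ℝ, 0 < ε → ∃ N : ℕ, ∀ j ≥ N, ∀ x : EuclideanSpace ℝ (Fin n), ‖x‖ = 1 →
      Metric.hausdorffDist (orbitSet (Gj j) x) (orbitSet G x) ≤ ε) :
    ∀ h ∈ H, ∀ x : EuclideanSpace ℝ (Fin n), ‖x‖ = 1 →
      matAct ((h : Matrix.orthogonalGroup (Fin n) ℝ) : Matrix (Fin n) (Fin n) ℝ) x
        ∈ orbitSet G x := by
  intro h hh x hx
  have horb_x : Tendsto (fun j => hausdorffDist (orbitSet (Gj j) x) (orbitSet G x)) atTop (𝓝 0) :=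
    tendsto_order.2 ⟨fun a ha => Eventually.of_forall fun _ => ha.trans_le hausdorffDist_nonneg,
      fun a ha => let ⟨N, hN⟩ := horb (a / 2) (half_pos ha)
        eventually_atTop.2 ⟨N, fun j hj => (hN j hj x hx).trans_lt (half_lt_self ha)⟩⟩
  rw [(isClosed_orbitSet hGclosed x).mem_iff_infDist_zero (orbitSet_nonempty G x)]
  refine le_antisymm
    (ge_of_tendsto' (x := atTop) ?_ fun j => infDist_matAct_orbitSet_le (Gj j) hh x) infDist_nonneg
  simpa using (hconv.mul_const ‖x‖).add horb_x

/-- Let `G` be a closed subgroup of `O(n)`, `(G_j)` a sequence of subgroups of `O(n)`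
converging in Hausdorff distance to a subgroup `H`, and suppose the orbit foliations
of the unit sphere induced by the `G_j` converge uniformly in Hausdorff distance to
the orbit foliation of `G`. Then `H` leaves every `G`-orbit on the unit sphere
invariant. -/
theorem limit_group_preserves_orbits (n : ℕ) (hn : 1 ≤ n)
    (G : Subgroup (Matrix.orthogonalGroup (Fin n) ℝ))
    (hGclosed : IsClosed
      ((fun g : Matrix.orthogonalGroup (Fin n) ℝ => (g : Matrix (Fin n) (Fin n) ℝ)) ''
        (G : Set (Matrix.orthogonalGroup (Fin n) ℝ))))
    (Gj : ℕ → Subgroup (Matrix.orthogonalGroup (Fin n) ℝ))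
    (H : Subgroup (Matrix.orthogonalGroup (Fin n) ℝ))
    (hconv : Filter.Tendsto (fun j => Metric.hausdorffDist
        ((fun g : Matrix.orthogonalGroup (Fin n) ℝ => (g : Matrix (Fin n) (Fin n) ℝ)) ''
          (Gj j : Set (Matrix.orthogonalGroup (Fin n) ℝ)))
        ((fun g : Matrix.orthogonalGroup (Fin n) ℝ => (g : Matrix (Fin n) (Fin n) ℝ)) ''
          (H : Set (Matrix.orthogonalGroup (Fin n) ℝ))))
      Filter.atTop (nhds 0))
    (horb : ∀ ε : ℝ, 0 < ε → ∃ N : ℕ, ∀ j ≥ N, ∀ x : EuclideanSpace ℝ (Fin n), ‖x‖ = 1 →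
      Metric.hausdorffDist (orbitSet (Gj j) x) (orbitSet G x) ≤ ε) :
    ∀ h ∈ H, ∀ x : EuclideanSpace ℝ (Fin n), ‖x‖ = 1 →
      matAct ((h : Matrix.orthogonalGroup (Fin n) ℝ) : Matrix (Fin n) (Fin n) ℝ) x
        ∈ orbitSet G x :=
  limit_group_preserves_orbits_general n G hGclosed Gj H hconv horb
end
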